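/- (Gottschalk–Hedlund) Let X be a compact metric space, T : X → X a minimal homeomorphism, and f : X → ℝ continuous. If there exists a point x₀ ∈ X and a constant M such that |∑_{i=0}^{n-1} f(Tⁱ x₀)| ≤ M for all n ∈ ℕ, then there exists a continuous function γ : X → ℝ with f = γ ∘ T - γ. -/

import Mathlib

/-!
Consider the skew product `S (x, t) = (T x, t + f x)` on `X × ℝ`. Its forward orbit through
`(x₀, 0)` is `(Tⁿ x₀, ∑_{i<n} f (Tⁱ x₀))`, so bounded Birkhoff sums make the orbit closure compact,
and it contains a minimal closed invariant set `K`. Since `S` commutes with vertical translations,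
`K` cannot meet any of its nontrivial vertical translates without being invariant under that
translation, which its boundedness forbids; so `K` is the graph of a function `γ`. The projection
of `K` is closed and `T`-invariant, hence all of `X` by minimality of `T`, and a compact graph over a
Hausdorff space is the graph of a continuous function. Invariance of the graph under `S` is the
equation `γ (T x) = γ x + f x`.
-/

open Set Function

section MinimalSet

variable {α : Type*} [TopologicalSpace α]

def IsMinimalSet (S : α → α) (K : Set α) : Prop :=
  Minimal (fun L : Set α => IsClosed L ∧ L.Nonempty ∧ MapsTo S L L) K

theorem IsCompact.exists_isMinimalSet_subset [T2Space α] {S : α → α} {Y : Set α}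
    (hY : IsCompact Y) (hne : Y.Nonempty) (hS : MapsTo S Y Y) :
    ∃ K ⊆ Y, IsMinimalSet S K := by
  set 𝒮 : Set (Set α) := {L | L ⊆ Y ∧ IsClosed L ∧ L.Nonempty ∧ MapsTo S L L}
  have hchain : ∀ c ⊆ 𝒮, IsChain (· ⊆ ·) c → c.Nonempty → ∃ lb ∈ 𝒮, ∀ s ∈ c, lb ⊆ s := by
    intro c hc𝒮 hc ⟨L₀, hL₀⟩
    have : Nonempty c := ⟨⟨L₀, hL₀⟩⟩
    have hdir : Directed (· ⊇ ·) (fun L : c => (L : Set α)) := fun L₁ L₂ =>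
      (hc.total L₁.2 L₂.2).elim (fun h => ⟨L₁, subset_rfl, h⟩) fun h => ⟨L₂, h, subset_rfl⟩
    refine ⟨⋂ L : c, L, ⟨(iInter_subset _ ⟨L₀, hL₀⟩).trans (hc𝒮 hL₀).1,
      isClosed_iInter fun L => (hc𝒮 L.2).2.1, ?_, ?_⟩,
      fun L hL => iInter_subset (fun L : c => (L : Set α)) ⟨L, hL⟩⟩
    · exact IsCompact.nonempty_iInter_of_directed_nonempty_isCompact_isClosed _ hdir
        (fun L => (hc𝒮 L.2).2.2.1) (fun L => hY.of_isClosed_subset (hc𝒮 L.2).2.1 (hc𝒮 L.2).1)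
        fun L => (hc𝒮 L.2).2.1
    · exact mapsTo_iInter_iInter fun L => (hc𝒮 L.2).2.2.2
  obtain ⟨K, hKY, hK⟩ := zorn_superset_nonempty 𝒮 hchain Y ⟨subset_rfl, hY.isClosed, hne, hS⟩
  exact ⟨K, hKY, hK.prop.2, fun L hL hLK => hK.2 ⟨hLK.trans hKY, hL⟩ hLK⟩

theorem IsMinimalSet.image_eq [T2Space α] {S : α → α} {K : Set α} (hK : IsMinimalSet S K)
    (hKc : IsCompact K) (hS : Continuous S) : S '' K = K := by
  obtain ⟨-, hne, hmaps⟩ := hK.prop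
  exact hK.eq_of_subset ⟨(hKc.image hS).isClosed, hne.image S,
    (Function.Commute.refl S).mapsTo_image hmaps⟩ hmaps.image_subset

end MinimalSet

open scoped Pointwise in
theorem Equiv.Perm.eq_univ_of_image_eq {X : Type*} [TopologicalSpace X] {e : Equiv.Perm X}
    (he : ∀ x, Dense (range fun n : ℤ => (e ^ n) x)) {A : Set X} (hA : IsClosed A)
    (hne : A.Nonempty) (heA : e '' A = A) : A = univ := by
  obtain ⟨x, hx⟩ := hne
  have hstab : e ∈ MulAction.stabilizer (Equiv.Perm X) A := heA
  refine eq_univ_of_univ_subset ((he x).closure_eq.symm.trans_subset (closure_minimal ?_ hA))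
  rintro _ ⟨n, rfl⟩
  have : (e ^ n) '' A = A := (MulAction.stabilizer (Equiv.Perm X) A).zpow_mem hstab n
  exact this ▸ mem_image_of_mem _ hx

theorem IsCompact.exists_continuous_graph_subset {X Y : Type*} [TopologicalSpace X] [T2Space X]
    [TopologicalSpace Y] {K : Set (X × Y)} (hK : IsCompact K) (hinj : InjOn Prod.fst K)
    (hsurj : Prod.fst '' K = univ) : ∃ g : X → Y, Continuous g ∧ ∀ x, (x, g x) ∈ K := by
  have : CompactSpace K := isCompact_iff_compactSpace.mp hK
  have hbij : Bijective (K.domRestrict Prod.fst) :=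
    ⟨injOn_iff_injective.mp hinj, fun x => by
      obtain ⟨p, hp, rfl⟩ := hsurj.symm ▸ mem_univ x
      exact ⟨⟨p, hp⟩, rfl⟩⟩
  let e := (continuous_fst.comp continuous_subtype_val).homeoOfEquivCompactToT2
    (f := .ofBijective _ hbij)
  refine ⟨fun x => (e.symm x : X × Y).2,
    continuous_snd.comp (continuous_subtype_val.comp e.symm.continuous), fun x => ?_⟩
  have hx : ((e.symm x : X × Y).1, (e.symm x : X × Y).2) = (x, (e.symm x : X × Y).2) :=
    congrArg (·, _) (e.apply_symm_apply x)
  exact hx ▸ (e.symm x).2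

section SkewProduct

variable {X : Type*}

def skewProduct (T : X → X) (f : X → ℝ) (p : X × ℝ) : X × ℝ :=
  (T p.1, p.2 + f p.1)

variable (T : X → X) (f : X → ℝ)

theorem skewProduct_iterate (x : X) (t : ℝ) (n : ℕ) :
    (skewProduct T f)^[n] (x, t) = (T^[n] x, t + ∑ i ∈ Finset.range n, f (T^[i] x)) := by
  induction n with
  | zero => simp
  | succ n ih =>
    rw [iterate_succ_apply', ih, skewProduct, Finset.sum_range_succ, iterate_succ_apply',
      add_assoc]

theorem semiconj_fst_skewProduct : Semiconj Prod.fst (skewProduct T f) T := fun _ => rfl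

theorem semiconj_prodMap_add_skewProduct (c : ℝ) :
    Semiconj (Prod.map id (· + c)) (skewProduct T f) (skewProduct T f) := fun _ =>
  Prod.ext rfl (add_right_comm _ _ _)

variable [TopologicalSpace X] {T f}

theorem Continuous.skewProduct (hT : Continuous T) (hf : Continuous f) :
    Continuous (skewProduct T f) :=
  (hT.comp continuous_fst).prodMk (continuous_snd.add (hf.comp continuous_fst))

/-- `K ∩ (K - c)` is closed and invariant, hence all of `K` as soon as it is nonempty. -/
theorem IsMinimalSet.add_mem_of_add_mem {K : Set (X × ℝ)}
    (hK : IsMinimalSet (skewProduct T f) K) {x : X} {a c : ℝ} (ha : (x, a) ∈ K)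
    (hac : (x, a + c) ∈ K) {p : X × ℝ} (hp : p ∈ K) : (p.1, p.2 + c) ∈ K := by
  obtain ⟨hKc, -, hmaps⟩ := hK.prop
  set K' := Prod.map id (· + c) ⁻¹' K ∩ K
  have hK' : K' = K := hK.eq_of_subset ⟨(hKc.preimage (by fun_prop)).inter hKc,
    ⟨(x, a), hac, ha⟩,
    ((semiconj_prodMap_add_skewProduct T f c).mapsTo_preimage hmaps).inter_inter hmaps⟩
    inter_subset_right
  exact (hK'.symm ▸ hp : p ∈ K').1

theorem IsMinimalSet.injOn_fst {K : Set (X × ℝ)} (hK : IsMinimalSet (skewProduct T f) K)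
    (hbdd : BddAbove (Prod.snd '' K)) : InjOn Prod.fst K := by
  suffices ∀ x a b, (x, a) ∈ K → (x, b) ∈ K → a ≤ b → a = b by
    rintro ⟨x, a⟩ ha ⟨y, b⟩ hb (rfl : x = y)
    rcases le_total a b with hab | hba
    · rw [this x a b ha hb hab]
    · rw [this x b a hb ha hba]
  intro x a b ha hb hab
  by_contra hne
  have hpos : 0 < b - a := sub_pos.mpr (lt_of_le_of_ne hab hne)
  have hiter : ∀ n : ℕ, (x, a + n * (b - a)) ∈ K := by
    intro n
    induction n with
    | zero => simpa using ha
    | succ n ih =>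
      have := hK.add_mem_of_add_mem (c := b - a) ha (by rwa [add_sub_cancel]) ih
      rwa [Nat.cast_succ, add_one_mul, ← add_assoc]
  obtain ⟨B, hB⟩ := hbdd
  obtain ⟨n, hn⟩ := exists_nat_gt ((B - a) / (b - a))
  have : a + n * (b - a) ≤ B := hB ⟨_, hiter n, rfl⟩
  rw [div_lt_iff₀ hpos] at hn
  linarith

end SkewProduct

/-- Gottschalk–Hedlund: for a minimal homeomorphism of a compact metric space,
a continuous function with bounded Birkhoff sums at one point is a continuous
coboundary. -/
theorem stmt_11 {X : Type*} [MetricSpace X] [CompactSpace X]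
    (T : X ≃ₜ X)
    (hmin : ∀ x : X, Dense (Set.range fun n : ℤ => (T.toEquiv ^ n) x))
    (f : X → ℝ) (hf : Continuous f)
    (x₀ : X) (M : ℝ)
    (hbd : ∀ n : ℕ, |∑ i ∈ Finset.range n, f ((⇑T)^[i] x₀)| ≤ M) :
    ∃ γ : X → ℝ, Continuous γ ∧ f = γ ∘ ⇑T - γ := by
  set S := skewProduct T f
  have hS : Continuous S := T.continuous.skewProduct hf
  set Y := closure (range fun n : ℕ => S^[n] (x₀, 0))
  have hY : IsCompact Y := by
    refine ((isCompact_univ (X := X)).prod (isCompact_Icc (a := -M) (b := M))).closure_of_subset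
      ?_
    rintro _ ⟨n, rfl⟩
    simp only [S, skewProduct_iterate, zero_add, mem_prod, mem_univ, true_and, mem_Icc]
    exact abs_le.mp (hbd n)
  have hSY : MapsTo S Y Y :=
    (Semiconj.mapsTo_range (fa := Nat.succ) fun n => iterate_succ_apply' S n _).closure hS
  obtain ⟨K, hKY, hK⟩ := hY.exists_isMinimalSet_subset ⟨_, subset_closure ⟨0, rfl⟩⟩ hSY
  have hKc : IsCompact K := hY.of_isClosed_subset hK.prop.1 hKY
  have hinj := hK.injOn_fst (hKc.image continuous_snd).bddAbove
  have hsurj : Prod.fst '' K = univ := by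
    refine Equiv.Perm.eq_univ_of_image_eq hmin (hKc.image continuous_fst).isClosed
      (hK.prop.2.1.image _) ?_
    rw [Homeomorph.coe_toEquiv, ← (semiconj_fst_skewProduct T f).set_image K, hK.image_eq hKc hS]
  obtain ⟨γ, hγ, hγK⟩ := hKc.exists_continuous_graph_subset hinj hsurj
  refine ⟨γ, hγ, funext fun x => ?_⟩
  have : (T x, γ (T x)) = (T x, γ x + f x) := hinj (hγK (T x)) (hK.prop.2.2 (hγK x)) rfl
  simp only [Prod.mk.injEq, true_and] at this
  simp only [Pi.sub_apply, comp_apply, this, add_sub_cancel_left]
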